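/- arXiv:2604.25017 — 5 statements merged into one kernel-verified Lean document; each statement's English description precedes it below -/
import Mathlib

section
/- Let n ≥ 16 be an integer and p, q, r, s ∈ ℂ[x] polynomials with gcd(p,q,r,s) = 1, max{deg p, deg q, deg r, deg s} ≥ 1, and p^n + q^n = r^n + s^n ≠ 0. Then {p^n, q^n} = {r^n, s^n} (as multisets). -/
/-!
Put `a = p`, `b = q`, `c = ζ r`, `d = ζ s` with `ζ ^ n = -1`, so that `a^n + b^n + c^n + d^n = 0`
and `a, b, c, d` generate the unit ideal.

If the Wronskian `W` of `a^n, b^n, c^n` is nonzero: every three of the four powers have the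
Wronskian `±W`, so `W` is divisible by the `(n-2)`-nd power of the product of any three of
`a, b, c, d`, hence by `(abcd)^(n-2)`; but its degree is at most `n` times the total degree of any
three of them, and summing these four bounds gives `4(n-2) ≤ 3n` unless all are constant.

If `W = 0`, the three powers are linearly dependent over `ℂ`. Either two of them are proportional
and merge into one term, or `c^n` is a combination of `a^n` and `b^n`; in both cases one is left
with a relation `u x^n + v y^n + w z^n = 0` with nonzero coefficients and coprime `x, y, z`, which
forces constants by the Mason–Stothers theorem (`Polynomial.flt_catalan`). The excluded pair sums
are exactly what keeps the merged coefficient nonzero.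
-/

open Polynomial

namespace Ideal

variable {R : Type*} [CommSemiring R]

theorem eq_top_of_forall_pow_mem {s : Set R} (hs : span s = ⊤) {I : Ideal R} (n : ℕ)
    (h : ∀ a ∈ s, a ^ n ∈ I) : I = ⊤ := by
  rw [eq_top_iff, ← span_pow_eq_top s hs n, span_le]
  rintro _ ⟨a, ha, rfl⟩
  exact h a ha

theorem span_eq_top_of_span_insert_eq_top {s : Set R} {x : R} {n : ℕ} (hn : n ≠ 0)
    (hs : span (insert x s) = ⊤) (hx : x ^ n ∈ span s) : span s = ⊤ :=
  eq_top_of_forall_pow_mem hs n <| Set.forall_mem_insert.2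
    ⟨hx, fun _ ha => pow_mem_of_mem _ (subset_span ha) n (Nat.pos_of_ne_zero hn)⟩

end Ideal

theorem dvd_of_forall_dvd_mul_pow {R : Type*} [CommSemiring R] {s : Set R}
    (hs : Ideal.span s = ⊤) (n : ℕ) {x y : R} (h : ∀ a ∈ s, x ∣ y * a ^ n) : x ∣ y := by
  have htop : (Ideal.span {x}).colon {y} = ⊤ := Ideal.eq_top_of_forall_pow_mem hs n fun a ha => by
    rw [Submodule.mem_colon_singleton, smul_eq_mul, mul_comm, Ideal.mem_span_singleton]
    exact h a ha
  exact Ideal.mem_span_singleton.1 <| by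
    simpa using Submodule.mem_colon_singleton.1 (htop ▸ Submodule.mem_top : (1 : R) ∈ _)

namespace EuclideanDomain

variable {R : Type*} [EuclideanDomain R] [DecidableEq R]

theorem gcd_mem {I : Ideal R} {a b : R} (ha : a ∈ I) (hb : b ∈ I) : gcd a b ∈ I := by
  rw [gcd_eq_gcd_ab]
  exact add_mem (I.mul_mem_right _ ha) (I.mul_mem_right _ hb)

theorem span_eq_top_of_gcd_eq_one {a b c d : R} (h : gcd (gcd (gcd a b) c) d = 1) :
    Ideal.span {a, b, c, d} = ⊤ := by
  rw [Ideal.eq_top_iff_one, ← h]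
  exact gcd_mem (gcd_mem (gcd_mem (Ideal.subset_span (by simp)) (Ideal.subset_span (by simp)))
    (Ideal.subset_span (by simp))) (Ideal.subset_span (by simp))

end EuclideanDomain

namespace Polynomial

section CommRing

variable {R : Type*} [CommRing R]

/-- The Wronskian determinant of `a, b, c`, expanded along its first row. -/
noncomputable def wronskian₃ (a b c : R[X]) : R[X] :=
  a * wronskian (derivative b) (derivative c) - b * wronskian (derivative a) (derivative c)
    + c * wronskian (derivative a) (derivative b)

theorem wronskian_C_mul_right (a b : R[X]) (μ : R) :
    wronskian a (C μ * b) = C μ * wronskian a b := by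
  simp only [← smul_eq_C_mul, ← wronskianBilin_apply, map_smul]

theorem wronskian_mul_mul_left (g a b : R[X]) :
    wronskian (g * a) (g * b) = g ^ 2 * wronskian a b := by
  simp only [wronskian, derivative_mul]
  ring

theorem wronskian_wronskian (a b c : R[X]) :
    wronskian (wronskian a b) (wronskian a c) = a * wronskian₃ a b c := by
  simp only [wronskian₃, wronskian, derivative_sub, derivative_mul]
  ring

theorem wronskian₃_eq_neg_of_sum_zero {a b c d : R[X]} (h : a + b + c + d = 0) :
    wronskian₃ d b c = -wronskian₃ a b c ∧ wronskian₃ a d c = -wronskian₃ a b c ∧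
      wronskian₃ a b d = -wronskian₃ a b c := by
  obtain rfl : d = -a - b - c := by linear_combination h
  simp only [wronskian₃, wronskian, derivative_sub, derivative_neg]
  exact ⟨by ring, by ring, by ring⟩

theorem natDegree_wronskian_le (a b : R[X]) :
    (wronskian a b).natDegree ≤ a.natDegree + b.natDegree := by
  by_cases hw : wronskian a b = 0
  · simp [hw]
  · exact (natDegree_wronskian_lt_add hw).le

theorem natDegree_wronskian₃_le (a b c : R[X]) :
    (wronskian₃ a b c).natDegree ≤ a.natDegree + b.natDegree + c.natDegree := by
  have hD : ∀ x : R[X], (derivative x).natDegree ≤ x.natDegree := fun x =>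
    (natDegree_derivative_le x).trans (Nat.sub_le _ _)
  have hW : ∀ x y : R[X], (wronskian (derivative x) (derivative y)).natDegree ≤
      x.natDegree + y.natDegree := fun x y =>
    (natDegree_wronskian_le _ _).trans (add_le_add (hD x) (hD y))
  refine (natDegree_add_le _ _).trans (max_le ((natDegree_sub_le _ _).trans (max_le ?_ ?_)) ?_) <;>
    refine natDegree_mul_le.trans ?_
  · linarith [hW b c]
  · linarith [hW a c]
  · linarith [hW a b]

theorem dvd_wronskian {s t u v : R[X]} (hu : s ∣ u) (hu' : s ∣ derivative u) (hv : t ∣ v)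
    (hv' : t ∣ derivative v) : s * t ∣ wronskian u v :=
  dvd_sub (mul_dvd_mul hu hv') (mul_dvd_mul hu' hv)

theorem pow_dvd_wronskian₃_pow (a b c : R[X]) (n : ℕ) :
    (a * b * c) ^ (n - 2) ∣ wronskian₃ (a ^ n) (b ^ n) (c ^ n) := by
  have hD : ∀ (t : R[X]) (i : ℕ), i ≤ 2 → t ^ (n - 2) ∣ derivative^[i] (t ^ n) :=
    fun t i hi =>
    (pow_dvd_pow t (by omega)).trans (pow_sub_dvd_iterate_derivative_pow t n i)
  have hW : ∀ x y : R[X], (x * y) ^ (n - 2) ∣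
      wronskian (derivative (x ^ n)) (derivative (y ^ n)) := fun x y =>
    mul_pow x y _ ▸ dvd_wronskian (hD x 1 (by omega)) (hD x 2 le_rfl) (hD y 1 (by omega))
      (hD y 2 le_rfl)
  have h0 : ∀ x : R[X], x ^ (n - 2) ∣ x ^ n := fun x => hD x 0 (by omega)
  refine dvd_add (dvd_sub ?_ ?_) ?_
  · rw [mul_assoc, mul_pow]
    exact mul_dvd_mul (h0 a) (hW b c)
  · rw [mul_right_comm, mul_pow, mul_comm]
    exact mul_dvd_mul (h0 b) (hW a c)
  · rw [mul_pow, mul_comm]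
    exact mul_dvd_mul (h0 c) (hW a b)

theorem natDegree_wronskian₃_pow_le (a b c : R[X]) (n : ℕ) :
    (wronskian₃ (a ^ n) (b ^ n) (c ^ n)).natDegree ≤
      n * a.natDegree + n * b.natDegree + n * c.natDegree :=
  (natDegree_wronskian₃_le _ _ _).trans
    (add_le_add (add_le_add natDegree_pow_le natDegree_pow_le) natDegree_pow_le)

theorem mul_pow_dvd_wronskian₃_pow_of_sum_eq_zero {n : ℕ} {a b c d : R[X]}
    (hspan : Ideal.span {a, b, c, d} = ⊤) (h : a ^ n + b ^ n + c ^ n + d ^ n = 0) :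
    (a * b * c * d) ^ (n - 2) ∣ wronskian₃ (a ^ n) (b ^ n) (c ^ n) := by
  obtain ⟨hWd, hWb, hWc⟩ := wronskian₃_eq_neg_of_sum_zero h
  refine dvd_of_forall_dvd_mul_pow hspan (n - 2) ?_
  simp only [Set.mem_insert_iff, Set.mem_singleton_iff, forall_eq_or_imp, forall_eq]
  have hda := pow_dvd_wronskian₃_pow d b c n
  have hdb := pow_dvd_wronskian₃_pow a d c n
  have hdc := pow_dvd_wronskian₃_pow a b d n
  rw [hWd, dvd_neg] at hda
  rw [hWb, dvd_neg] at hdb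
  rw [hWc, dvd_neg] at hdc
  refine ⟨?_, ?_, ?_, ?_⟩
  · rw [show (a * b * c * d) ^ (n - 2) = (d * b * c) ^ (n - 2) * a ^ (n - 2) by ring]
    exact mul_dvd_mul_right hda _
  · rw [show (a * b * c * d) ^ (n - 2) = (a * d * c) ^ (n - 2) * b ^ (n - 2) by ring]
    exact mul_dvd_mul_right hdb _
  · rw [show (a * b * c * d) ^ (n - 2) = (a * b * d) ^ (n - 2) * c ^ (n - 2) by ring]
    exact mul_dvd_mul_right hdc _
  · rw [show (a * b * c * d) ^ (n - 2) = (a * b * c) ^ (n - 2) * d ^ (n - 2) by ring]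
    exact mul_dvd_mul_right (pow_dvd_wronskian₃_pow a b c n) _

end CommRing

theorem natDegree_eq_zero_of_natDegree_pow_eq_zero {R : Type*} [Semiring R] [NoZeroDivisors R]
    {a : R[X]} {n : ℕ} (hn : n ≠ 0) (h : (a ^ n).natDegree = 0) : a.natDegree = 0 := by
  rw [natDegree_pow] at h
  exact (mul_eq_zero.1 h).resolve_left hn

section Field

variable {K : Type*} [Field K]

theorem isCoprime_of_C_mul_pow_add_C_mul_pow_add_C_mul_pow_eq_zero {n : ℕ} (hn : n ≠ 0)
    {u v w : K} (hw : w ≠ 0) {a b c : K[X]} (hspan : Ideal.span {c, a, b} = ⊤)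
    (h : C u * a ^ n + C v * b ^ n + C w * c ^ n = 0) : IsCoprime a b := by
  refine (Ideal.sup_eq_top_iff_isCoprime a b).1 ?_
  rw [← Ideal.span_insert]
  refine Ideal.span_eq_top_of_span_insert_eq_top hn hspan ?_
  rw [← Ideal.unit_mul_mem_iff_mem _ (isUnit_C.2 hw.isUnit),
    show C w * c ^ n = -(C u * a ^ n) - C v * b ^ n by linear_combination h]
  refine sub_mem (neg_mem (Ideal.mul_mem_left _ _ (Ideal.pow_mem_of_mem _ ?_ n (by omega))))
    (Ideal.mul_mem_left _ _ (Ideal.pow_mem_of_mem _ ?_ n (by omega))) <;>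
    exact Ideal.subset_span (by simp)

variable [CharZero K]

theorem exists_eq_C_mul_of_wronskian_eq_zero {a b : K[X]} (ha : a ≠ 0) (h : wronskian a b = 0) :
    ∃ μ : K, b = C μ * a := by
  classical
  obtain ⟨a', b', ha', hb', hunit⟩ := extract_gcd a b
  have hg : gcd a b ≠ 0 := gcd_ne_zero_of_left ha
  generalize gcd a b = g at ha' hb' hg
  subst ha' hb'
  have hW : wronskian a' b' = 0 := by
    rw [wronskian_mul_mul_left] at h
    exact (mul_eq_zero.1 h).resolve_left (pow_ne_zero 2 hg)
  obtain ⟨hDa, hDb⟩ := ((gcd_isUnit_iff a' b').1 hunit).wronskian_eq_zero_iff.1 hW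
  rw [eq_C_of_derivative_eq_zero hDa] at ha ⊢
  rw [eq_C_of_derivative_eq_zero hDb]
  have ha0 : a'.coeff 0 ≠ 0 := fun h0 => ha (by rw [h0, C_0, mul_zero])
  refine ⟨b'.coeff 0 / a'.coeff 0, ?_⟩
  rw [mul_left_comm, ← C_mul, div_mul_cancel₀ _ ha0]

theorem exists_eq_C_mul_add_C_mul_of_wronskian₃_eq_zero {a b c : K[X]}
    (h : wronskian₃ a b c = 0) (hab : wronskian a b ≠ 0) :
    ∃ α β : K, c = C α * a + C β * b := by
  have ha : a ≠ 0 := by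
    rintro rfl
    exact hab (wronskian_zero_left b)
  obtain ⟨β, hβ⟩ := exists_eq_C_mul_of_wronskian_eq_zero hab
    (by rw [wronskian_wronskian, h, mul_zero])
  obtain ⟨α, hα⟩ := exists_eq_C_mul_of_wronskian_eq_zero (b := c - C β * b) ha
    (by rw [sub_eq_add_neg, wronskian_add_right, wronskian_neg_right, wronskian_C_mul_right,
      ← hβ, add_neg_cancel])
  exact ⟨α, β, by linear_combination hα⟩

theorem natDegree_eq_zero_of_C_mul_pow_add_C_mul_pow_add_C_mul_pow_eq_zero {n : ℕ} (hn : 3 ≤ n)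
    {u v w : K} (hu : u ≠ 0) (hv : v ≠ 0) (hw : w ≠ 0) {a b c : K[X]}
    (hspan : Ideal.span {a, b, c} = ⊤) (h : C u * a ^ n + C v * b ^ n + C w * c ^ n = 0) :
    a.natDegree = 0 ∧ b.natDegree = 0 ∧ c.natDegree = 0 := by
  have hab : IsCoprime a b := isCoprime_of_C_mul_pow_add_C_mul_pow_add_C_mul_pow_eq_zero
    (by omega) hw (by rwa [Set.pair_comm, Set.insert_comm] at hspan) h
  have hbc : IsCoprime b c := isCoprime_of_C_mul_pow_add_C_mul_pow_add_C_mul_pow_eq_zero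
    (n := n) (u := v) (v := w) (by omega) hu hspan (by linear_combination h)
  have hca : IsCoprime c a := isCoprime_of_C_mul_pow_add_C_mul_pow_add_C_mul_pow_eq_zero
    (n := n) (u := w) (v := u) (c := b) (by omega) hv
    (by rwa [Set.insert_comm, Set.pair_comm] at hspan) (by linear_combination h)
  rcases eq_or_ne a 0 with rfl | ha
  · exact ⟨natDegree_zero, natDegree_eq_zero_of_isUnit (isCoprime_zero_left.1 hab),
      natDegree_eq_zero_of_isUnit (isCoprime_zero_right.1 hca)⟩
  rcases eq_or_ne b 0 with rfl | hb
  · exact ⟨natDegree_eq_zero_of_isUnit (isCoprime_zero_right.1 hab), natDegree_zero,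
      natDegree_eq_zero_of_isUnit (isCoprime_zero_left.1 hbc)⟩
  rcases eq_or_ne c 0 with rfl | hc
  · exact ⟨natDegree_eq_zero_of_isUnit (isCoprime_zero_left.1 hca),
      natDegree_eq_zero_of_isUnit (isCoprime_zero_right.1 hbc), natDegree_zero⟩
  have hn0 : n ≠ 0 := by omega
  exact flt_catalan hn0 hn0 hn0 (by nlinarith) (Nat.cast_ne_zero.2 hn0) (Nat.cast_ne_zero.2 hn0)
    (Nat.cast_ne_zero.2 hn0) ha hb hc hab hu hv hw h

theorem natDegree_eq_zero_of_pow_add_pow_add_pow_add_pow_eq_zero_of_wronskian_eq_zero {n : ℕ}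
    (hn : 3 ≤ n) {a b c d : K[X]} (hspan : Ideal.span {a, b, c, d} = ⊤)
    (h : a ^ n + b ^ n + c ^ n + d ^ n = 0) (hab : a ^ n + b ^ n ≠ 0)
    (hW : wronskian (a ^ n) (b ^ n) = 0) :
    a.natDegree = 0 ∧ b.natDegree = 0 ∧ c.natDegree = 0 ∧ d.natDegree = 0 := by
  have hn0 : n ≠ 0 := by omega
  rcases eq_or_ne a 0 with rfl | ha
  · rw [Ideal.span_insert_zero] at hspan
    obtain ⟨hb, hc, hd⟩ := natDegree_eq_zero_of_C_mul_pow_add_C_mul_pow_add_C_mul_pow_eq_zero hn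
      one_ne_zero one_ne_zero one_ne_zero hspan
      (by rw [C_1, zero_pow hn0] at *; linear_combination h)
    exact ⟨natDegree_zero, hb, hc, hd⟩
  obtain ⟨μ, hμ⟩ := exists_eq_C_mul_of_wronskian_eq_zero (pow_ne_zero n ha) hW
  have hμ1 : 1 + μ ≠ 0 := by
    rintro h0
    apply hab
    rw [hμ, ← one_mul (a ^ n), ← mul_assoc, mul_one, ← C_1, ← add_mul, ← C_add, h0, C_0,
      zero_mul]
  have hspan' : Ideal.span {a, c, d} = ⊤ := by
    refine Ideal.span_eq_top_of_span_insert_eq_top hn0 (by rwa [Set.insert_comm] at hspan) ?_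
    rw [hμ]
    exact Ideal.mul_mem_left _ _ (Ideal.pow_mem_of_mem _ (Ideal.subset_span (by simp)) n (by omega))
  obtain ⟨ha, hc, hd⟩ := natDegree_eq_zero_of_C_mul_pow_add_C_mul_pow_add_C_mul_pow_eq_zero hn
    hμ1 one_ne_zero one_ne_zero hspan' (by rw [C_add, C_1]; linear_combination h - hμ)
  refine ⟨ha, natDegree_eq_zero_of_natDegree_pow_eq_zero hn0 ?_, hc, hd⟩
  rw [hμ]
  exact Nat.le_zero.1 ((natDegree_C_mul_le _ _).trans (by rw [natDegree_pow, ha, mul_zero]))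

theorem wronskian₃_pow_eq_zero {n : ℕ} (hn : 9 ≤ n) {a b c d : K[X]}
    (hspan : Ideal.span {a, b, c, d} = ⊤) (h : a ^ n + b ^ n + c ^ n + d ^ n = 0) :
    wronskian₃ (a ^ n) (b ^ n) (c ^ n) = 0 := by
  obtain ⟨hWd, hWb, hWc⟩ := wronskian₃_eq_neg_of_sum_zero h
  set W := wronskian₃ (a ^ n) (b ^ n) (c ^ n)
  have hdvd := mul_pow_dvd_wronskian₃_pow_of_sum_eq_zero hspan h
  by_contra hW
  have hP : a * b * c * d ≠ 0 := fun h0 => hW <| by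
    rwa [h0, zero_pow (by omega), zero_dvd_iff] at hdvd
  simp only [ne_eq, mul_eq_zero, not_or] at hP
  obtain ⟨⟨⟨ha, hb⟩, hc⟩, hd⟩ := hP
  have hlow := natDegree_le_of_dvd hdvd hW
  rw [natDegree_pow, natDegree_mul (mul_ne_zero (mul_ne_zero ha hb) hc) hd,
    natDegree_mul (mul_ne_zero ha hb) hc, natDegree_mul ha hb] at hlow
  have h1 := natDegree_wronskian₃_pow_le a b c n
  have h2 := natDegree_wronskian₃_pow_le d b c n
  have h3 := natDegree_wronskian₃_pow_le a d c n
  have h4 := natDegree_wronskian₃_pow_le a b d n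
  rw [hWd, natDegree_neg] at h2
  rw [hWb, natDegree_neg] at h3
  rw [hWc, natDegree_neg] at h4
  -- adding up the four upper bounds: `4 (n - 2) S ≤ 3 n S`
  have hS : a.natDegree + b.natDegree + c.natDegree + d.natDegree = 0 := by
    obtain ⟨k, rfl⟩ : ∃ k, n = k + 9 := ⟨n - 9, by omega⟩
    simp only [show k + 9 - 2 = k + 7 by omega] at hlow
    nlinarith
  have hD : ∀ x : K[X], x.natDegree = 0 → derivative (x ^ n) = 0 := fun x hx => by
    rw [derivative_eq_zero, natDegree_pow, hx, mul_zero]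
  exact hW <| by
    simp [W, wronskian₃, wronskian, hD a (by omega), hD b (by omega), hD c (by omega)]

theorem natDegree_eq_zero_of_pow_add_pow_add_pow_add_pow_eq_zero {n : ℕ} (hn : 9 ≤ n)
    {a b c d : K[X]} (hspan : Ideal.span {a, b, c, d} = ⊤)
    (h : a ^ n + b ^ n + c ^ n + d ^ n = 0) (hab : a ^ n + b ^ n ≠ 0) (hac : a ^ n + c ^ n ≠ 0)
    (hbc : b ^ n + c ^ n ≠ 0) :
    a.natDegree = 0 ∧ b.natDegree = 0 ∧ c.natDegree = 0 ∧ d.natDegree = 0 := by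
  have hn3 : 3 ≤ n := by omega
  have hn0 : n ≠ 0 := by omega
  by_cases hWab : wronskian (a ^ n) (b ^ n) = 0
  · exact natDegree_eq_zero_of_pow_add_pow_add_pow_add_pow_eq_zero_of_wronskian_eq_zero hn3
      hspan h hab hWab
  obtain ⟨α, β, hαβ⟩ :=
    exists_eq_C_mul_add_C_mul_of_wronskian₃_eq_zero (wronskian₃_pow_eq_zero hn hspan h) hWab
  rcases eq_or_ne α 0 with rfl | hα
  · obtain ⟨hb, hc, ha, hd⟩ :=
      natDegree_eq_zero_of_pow_add_pow_add_pow_add_pow_eq_zero_of_wronskian_eq_zero hn3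
        (a := b) (b := c) (c := a) (d := d)
        (by rwa [Set.insert_comm a b, Set.insert_comm a c] at hspan) (by linear_combination h) hbc
        (by rw [hαβ, C_0, zero_mul, zero_add, wronskian_C_mul_right, wronskian_self_eq_zero,
          mul_zero])
    exact ⟨ha, hb, hc, hd⟩
  rcases eq_or_ne β 0 with rfl | hβ
  · obtain ⟨ha, hc, hb, hd⟩ :=
      natDegree_eq_zero_of_pow_add_pow_add_pow_add_pow_eq_zero_of_wronskian_eq_zero hn3
        (a := a) (b := c) (c := b) (d := d)
        (by rwa [Set.insert_comm b c] at hspan) (by linear_combination h) hac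
        (by rw [hαβ, C_0, zero_mul, add_zero, wronskian_C_mul_right, wronskian_self_eq_zero,
          mul_zero])
    exact ⟨ha, hb, hc, hd⟩
  have hmem : ∀ x ∈ ({a, b, c} : Set K[X]), x ^ n ∈ Ideal.span {a, b, c} := fun x hx =>
    Ideal.pow_mem_of_mem _ (Ideal.subset_span hx) n (by omega)
  have hspan' : Ideal.span {a, b, c} = ⊤ := by
    refine Ideal.span_eq_top_of_span_insert_eq_top (x := d) hn0
      (by rwa [Set.pair_comm, Set.insert_comm b d, Set.insert_comm a d] at hspan) ?_
    rw [show d ^ n = -(a ^ n + b ^ n + c ^ n) by linear_combination h]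
    exact neg_mem (add_mem (add_mem (hmem a (by simp)) (hmem b (by simp))) (hmem c (by simp)))
  obtain ⟨ha, hb, hc⟩ := natDegree_eq_zero_of_C_mul_pow_add_C_mul_pow_add_C_mul_pow_eq_zero hn3
    hα hβ (neg_ne_zero.2 one_ne_zero) hspan' (by rw [map_neg, C_1]; linear_combination -hαβ)
  refine ⟨ha, hb, hc, natDegree_eq_zero_of_natDegree_pow_eq_zero hn0 ?_⟩
  have hconst : ∀ x : K[X], x.natDegree = 0 → (x ^ n).natDegree ≤ 0 := fun x hx => by
    rw [natDegree_pow, hx, mul_zero]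
  rw [show d ^ n = -(a ^ n + b ^ n + c ^ n) by linear_combination h, natDegree_neg]
  exact Nat.le_zero.1 (natDegree_add_le_of_degree_le (natDegree_add_le_of_degree_le
    (hconst a ha) (hconst b hb)) (hconst c hc))

end Field

end Polynomial

theorem taxicab_polynomials (n : ℕ) (hn : 16 ≤ n) (p q r s : ℂ[X])
    (hgcd : EuclideanDomain.gcd (EuclideanDomain.gcd (EuclideanDomain.gcd p q) r) s = 1)
    (hdeg : 1 ≤ max (max (max p.natDegree q.natDegree) r.natDegree) s.natDegree)
    (heq : p ^ n + q ^ n = r ^ n + s ^ n) (hne : p ^ n + q ^ n ≠ 0) :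
    ({p ^ n, q ^ n} : Multiset ℂ[X]) = {r ^ n, s ^ n} := by
  by_cases hpr : p ^ n = r ^ n
  · rw [hpr, add_right_inj] at heq
    rw [hpr, heq]
  by_cases hps : p ^ n = s ^ n
  · rw [hps, add_comm, add_left_inj] at heq
    rw [hps, heq, Multiset.pair_comm]
  exfalso
  obtain ⟨ζ, hζ⟩ := IsAlgClosed.exists_pow_nat_eq (-1 : ℂ) (by omega : 0 < n)
  have hζ0 : ζ ≠ 0 := by
    rintro rfl
    simp [zero_pow (by omega : n ≠ 0)] at hζ
  have hneg : ∀ t : ℂ[X], (C ζ * t) ^ n = -t ^ n := fun t => by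
    rw [mul_pow, ← C_pow, hζ, C_neg, C_1, neg_one_mul]
  have hspan : Ideal.span {p, q, C ζ * r, C ζ * s} = ⊤ := by
    simpa only [Ideal.span_insert, Ideal.span_singleton_mul_left_unit (isUnit_C.2 hζ0.isUnit)]
      using EuclideanDomain.span_eq_top_of_gcd_eq_one hgcd
  obtain ⟨hp, hq, hr, hs⟩ := natDegree_eq_zero_of_pow_add_pow_add_pow_add_pow_eq_zero (by omega)
    hspan (by rw [hneg, hneg]; linear_combination heq) hne
    (by rw [hneg, ← sub_eq_add_neg]; exact sub_ne_zero.2 hpr)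
    (by rw [hneg, ← sub_eq_add_neg, show q ^ n - r ^ n = s ^ n - p ^ n by linear_combination heq]
        exact sub_ne_zero.2 (Ne.symm hps))
  rw [natDegree_C_mul hζ0] at hr hs
  simp [hp, hq, hr, hs] at hdeg
end

section
/- Let m ≥ 3 be an integer, p_1, …, p_m ∈ ℂ[x] nonzero polynomials, and k_1, …, k_m positive integers such that gcd(p_1^{k_1}, …, p_m^{k_m}) = 1, p_1^{k_1} + p_2^{k_2} + ⋯ + p_m^{k_m} = 0, and any m−1 of the polynomials p_i^{k_i} are linearly independent over ℂ. Then min{k_1, …, k_m} < (m^3 + 7m^2 − 49m + 68)/3. -/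
/-!
Write `f i = p i ^ k i` and `N = m - 1`. For each `i`, the Wronskian `W` of the `N` polynomials
`f j`, `j ≠ i`, is nonzero by linear independence and has degree at most `∑_{j ≠ i} deg f j`;
since `∑ f j = 0`, these Wronskians all agree up to sign. At a point `a`, some `f i₁` does not
vanish because the gcd is `1`, and in the Wronskian omitting `f i₁` the row of `f j` is divisible
by `(X - a) ^ (ord_a f j - (N - 1))`. Hence
`ord_a W ≥ ∑_j ord_a f j - (N - 1) · #{j | f j a = 0}`, and summing over all `a` gives
`deg f i ≤ (N - 1) · ∑_j #roots(f j)`. As `deg f j = k j · deg p j ≥ (min k) · #roots(f j)`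
and some `f j` is nonconstant, this forces `min k ≤ m (m - 2)`, which is below the stated bound.
-/

open Polynomial Finset Function

variable {R : Type*} [CommRing R]

theorem Polynomial.coeff_prod_sum_of_natDegree_le {ι : Type*} (s : Finset ι) (f : ι → R[X])
    (d : ι → ℕ) (h : ∀ i ∈ s, (f i).natDegree ≤ d i) :
    (∏ i ∈ s, f i).coeff (∑ i ∈ s, d i) = ∏ i ∈ s, (f i).coeff (d i) := by
  classical
  induction s using Finset.cons_induction with
  | empty => simp
  | cons a s ha ih =>
    rw [prod_cons, sum_cons, prod_cons, coeff_mul_add_eq_of_natDegree_le (h a (mem_cons_self _ _))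
      ((natDegree_prod_le _ _).trans (sum_le_sum fun i hi => h i (mem_cons_of_mem hi))),
      ih fun i hi => h i (mem_cons_of_mem hi)]

namespace Matrix

variable {n : Type*} [Fintype n] [DecidableEq n]

theorem natDegree_det_le (M : Matrix n n R[X]) (d : n → ℕ)
    (h : ∀ i j, (M i j).natDegree ≤ d i) : M.det.natDegree ≤ ∑ i, d i := by
  rw [det_apply']
  refine natDegree_sum_le_of_forall_le _ _ fun σ _ => ?_
  refine natDegree_mul_le.trans ?_
  rw [natDegree_intCast, zero_add, ← Equiv.sum_comp σ d]
  exact (natDegree_prod_le _ _).trans (sum_le_sum fun j _ => h _ _)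

theorem coeff_det_sum_sub_sum (M : Matrix n n R[X]) (u v : n → ℕ)
    (h : ∀ i j, M i j ≠ 0 → (M i j).natDegree + v j ≤ u i) :
    M.det.coeff (∑ i, u i - ∑ j, v j) = (of fun i j => (M i j).coeff (u i - v j)).det := by
  rw [det_apply', finsetSum_coeff, det_apply']
  refine sum_congr rfl fun σ _ => ?_
  rw [← map_intCast (C : R →+* R[X]), coeff_C_mul]
  congr 1
  by_cases hσ : ∀ j, M (σ j) j ≠ 0
  · have hsum : ∑ i, u i - ∑ j, v j = ∑ j, (u (σ j) - v j) := by
      have hle : ∀ j, v j ≤ u (σ j) := fun j => (Nat.le_add_left _ _).trans (h _ _ (hσ j))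
      rw [← Equiv.sum_comp σ u, tsub_eq_iff_eq_add_of_le (sum_le_sum fun j _ => hle j),
        ← sum_add_distrib]
      exact sum_congr rfl fun j _ => (Nat.sub_add_cancel (hle j)).symm
    rw [hsum, coeff_prod_sum_of_natDegree_le _ _ _ fun j _ => Nat.le_sub_of_add_le (h _ _ (hσ j))]
    rfl
  · push Not at hσ
    obtain ⟨j, hj⟩ := hσ
    rw [prod_eq_zero (f := fun i => M (σ i) i) (mem_univ j) hj, coeff_zero]
    exact (prod_eq_zero (mem_univ j) (by simp [hj])).symm

end Matrix

namespace Polynomial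

noncomputable def wronskianMatrix {ι : Type*} (f : ι → R[X]) (N : ℕ) :
    Matrix ι (Fin N) R[X] :=
  Matrix.of fun i r => derivative^[r] (f i)

@[simp]
theorem wronskianMatrix_apply {ι : Type*} (f : ι → R[X]) (N : ℕ) (i : ι) (r : Fin N) :
    wronskianMatrix f N i r = derivative^[r] (f i) :=
  rfl

variable {N : ℕ}

theorem natDegree_det_wronskianMatrix_le (g : Fin N → R[X]) :
    (wronskianMatrix g N).det.natDegree ≤ ∑ c, (g c).natDegree :=
  Matrix.natDegree_det_le _ _ fun _ _ =>
    (natDegree_iterate_derivative _ _).trans (Nat.sub_le _ _)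

theorem pow_dvd_det_wronskianMatrix (g : Fin N → R[X]) {q : R[X]} (e : Fin N → ℕ)
    (h : ∀ c, q ^ e c ∣ g c) : q ^ ∑ c, (e c - (N - 1)) ∣ (wronskianMatrix g N).det := by
  have hentry : ∀ c r, q ^ (e c - (N - 1)) ∣ wronskianMatrix g N c r := fun c r =>
    (pow_dvd_pow _ (by omega)).trans (pow_sub_dvd_iterate_derivative_of_pow_dvd _ (h c))
  choose M hM using hentry
  have : wronskianMatrix g N = Matrix.of fun c r => q ^ (e c - (N - 1)) * Matrix.of M c r :=
    Matrix.ext hM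
  rw [this, Matrix.det_mul_column, prod_pow_eq_pow_sum]
  exact dvd_mul_right _ _

theorem det_wronskianMatrix_update_sub_C_mul (g : Fin N → R[X]) {c c' : Fin N} (hcc' : c ≠ c')
    (a : R) :
    (wronskianMatrix (Function.update g c (g c - C a * g c')) N).det =
      (wronskianMatrix g N).det := by
  have : wronskianMatrix (Function.update g c (g c - C a * g c')) N =
      (wronskianMatrix g N).updateRow c
        (wronskianMatrix g N c + (-C a) • wronskianMatrix g N c') := by
    ext i r
    rcases eq_or_ne i c with rfl | hi
    · simp [iterate_derivative_C_mul, sub_eq_add_neg]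
    · simp [hi]
  rw [this, Matrix.det_updateRow_add_smul_self _ hcc']

theorem det_wronskianMatrix_comp_succAbove (f : Fin (N + 1) → R[X]) (hf : ∑ i, f i = 0)
    (i j : Fin (N + 1)) :
    (wronskianMatrix (f ∘ i.succAbove) N).det =
      Int.negOnePow ((i : ℤ) - j) • (wronskianMatrix (f ∘ j.succAbove) N).det := by
  refine Matrix.submatrix_succAbove_det_eq_negOnePow_submatrix_succAbove_det
    (wronskianMatrix f N) ?_ i j
  have hrow : ∀ i, wronskianMatrix f N i = fun r : Fin N => derivative^[r] (f i) := fun _ => rfl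
  simp only [hrow]
  funext r
  simp [Finset.sum_apply, ← iterate_derivative_sum, hf]

section Field

variable {K : Type*} [Field K]

theorem exists_natDegree_pos_of_linearIndependent {ι : Type*} {g : ι → K[X]}
    (hg : LinearIndependent K g) {i j : ι} (hij : i ≠ j) : ∃ l, 0 < (g l).natDegree := by
  by_contra! hconst
  obtain ⟨a, ha⟩ := natDegree_eq_zero.mp (Nat.le_zero.mp (hconst i))
  obtain ⟨b, hb⟩ := natDegree_eq_zero.mp (Nat.le_zero.mp (hconst j))
  have hpair := (LinearIndepOn.pair_iff g hij).mp (hg.linearIndepOn _) b (-a)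
    (by rw [← ha, ← hb, smul_C, smul_C, ← C_add, smul_eq_mul, smul_eq_mul]; simp [mul_comm])
  exact hg.ne_zero j (by rw [← hb, hpair.1, C_0])

section CharZero

variable [CharZero K]

theorem det_wronskianMatrix_ne_zero_of_injective (g : Fin N → K[X]) (hg : ∀ c, g c ≠ 0)
    (hinj : Injective fun c => (g c).natDegree) : (wronskianMatrix g N).det ≠ 0 := by
  set d : Fin N → ℕ := fun c => (g c).natDegree
  have hbound : ∀ c r, wronskianMatrix g N c r ≠ 0 →
      (wronskianMatrix g N c r).natDegree + (r : ℕ) ≤ d c := by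
    intro c r hcr
    have hr : (r : ℕ) ≤ d c := not_lt.mp fun hlt => hcr (iterate_derivative_eq_zero hlt)
    have := natDegree_iterate_derivative (g c) r
    simp only [d, wronskianMatrix_apply] at hr hcr ⊢
    omega
  have hcoeff : ∀ c r : Fin N, (wronskianMatrix g N c r).coeff (d c - r) =
      (g c).leadingCoeff * ((d c).descFactorial r : K) := by
    intro c r
    rw [wronskianMatrix_apply, coeff_iterate_derivative, nsmul_eq_mul, mul_comm]
    rcases le_or_gt (r : ℕ) (d c) with hr | hr
    · rw [Nat.sub_add_cancel hr]; rfl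
    · rw [Nat.descFactorial_eq_zero_iff_lt.mpr hr,
        coeff_eq_zero_of_natDegree_lt (by omega : d c < d c - r + r)]
      simp
  have hdet : (wronskianMatrix g N).det.coeff (∑ c, d c - ∑ r : Fin N, (r : ℕ)) = (∏ c,
      (g c).leadingCoeff) * (Matrix.of fun c r : Fin N => ((d c).descFactorial r : K)).det := by
    rw [Matrix.coeff_det_sum_sub_sum _ d (fun r => r) hbound, ← Matrix.det_mul_column]
    exact congrArg Matrix.det (Matrix.ext hcoeff)
  have hvdm : (Matrix.of fun c r : Fin N => ((d c).descFactorial r : K)).det ≠ 0 := by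
    have : (Matrix.of fun c r : Fin N => ((d c).descFactorial r : K)) =
        Matrix.of fun c r : Fin N => (descPochhammer K r).eval (d c : K) := by
      ext; simp [descPochhammer_eval_eq_descFactorial]
    rw [this, ← Matrix.det_eval_matrixOfPolynomials_eq_det_vandermonde _ _
      (fun r => descPochhammer_natDegree K r) (fun r => monic_descPochhammer K r)]
    exact Matrix.det_vandermonde_ne_zero_iff.mpr fun a b hab => hinj (Nat.cast_injective hab)
  intro h0
  rw [h0, coeff_zero] at hdet
  exact mul_ne_zero (prod_ne_zero_iff.mpr fun c _ => leadingCoeff_ne_zero.mpr (hg c)) hvdm hdet.symm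

theorem det_wronskianMatrix_ne_zero (g : Fin N → K[X]) (hg : LinearIndependent K g) :
    (wronskianMatrix g N).det ≠ 0 := by
  by_cases hinj : Injective fun c => (g c).natDegree
  · exact det_wronskianMatrix_ne_zero_of_injective g hg.ne_zero hinj
  obtain ⟨c, c', hdeg, hcc'⟩ : ∃ c c', (g c).natDegree = (g c').natDegree ∧ c ≠ c' := by
    simpa [Injective] using hinj
  have hc := leadingCoeff_ne_zero.mpr (hg.ne_zero c)
  have hc' := leadingCoeff_ne_zero.mpr (hg.ne_zero c')
  set a := (g c).leadingCoeff / (g c').leadingCoeff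
  set g' := Function.update g c (g c - C a * g c')
  have hg' : LinearIndependent K g' := hg.update c _ ⟨1, one_mem _,
    Finsupp.single c 1 - Finsupp.single c' a, by simp [hcc'], by simp [smul_eq_C_mul]⟩
  -- Cancelling the leading terms of two entries of equal degree lowers the total degree.
  have hlt : (g' c).natDegree < (g c).natDegree := by
    refine natDegree_lt_natDegree (hg'.ne_zero c) ?_
    rw [show g' c = g c - C a * g c' from update_self ..]
    refine degree_sub_lt_left ?_ (hg.ne_zero c) ?_
    · rw [degree_C_mul (div_ne_zero hc hc'), degree_eq_natDegree (hg.ne_zero c'),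
        degree_eq_natDegree (hg.ne_zero c), hdeg]
    · rw [leadingCoeff_mul, leadingCoeff_C, div_mul_cancel₀ _ hc']
  have hdec : ∑ i, (g' i).natDegree < ∑ i, (g i).natDegree := by
    refine sum_lt_sum (fun i _ => ?_) ⟨c, mem_univ c, hlt⟩
    rcases eq_or_ne i c with rfl | hi
    · exact hlt.le
    · simp [g', hi]
  rw [← det_wronskianMatrix_update_sub_C_mul g hcc' a]
  exact det_wronskianMatrix_ne_zero g' hg'
termination_by ∑ c, (g c).natDegree

end CharZero

variable [DecidableEq K]

theorem mul_card_roots_toFinset_pow_le (p : K[X]) (k : ℕ) :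
    k * #(p ^ k).roots.toFinset ≤ (p ^ k).natDegree := by
  rcases eq_or_ne k 0 with rfl | hk
  · simp
  rw [roots_pow, Multiset.toFinset_nsmul _ _ hk, natDegree_pow]
  exact Nat.mul_le_mul_left _ ((Multiset.toFinset_card_le _).trans (card_roots' p))

theorem exists_not_isRoot_of_gcd_eq_one {ι : Type*} {s : Finset ι} {f : ι → K[X]}
    (hf : s.gcd f = 1) (a : K) : ∃ i ∈ s, ¬(f i).IsRoot a := by
  by_contra! hroot
  have : X - C a ∣ s.gcd f := dvd_gcd fun i hi => dvd_iff_isRoot.mpr (hroot i hi)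
  rw [hf] at this
  exact not_isUnit_X_sub_C a (isUnit_of_dvd_one this)

theorem sum_count_roots_le_of_sum_eq_zero (f : Fin (N + 1) → K[X]) (hf : ∑ i, f i = 0)
    (hcop : ∀ a, ∃ j, ¬(f j).IsRoot a) (i : Fin (N + 1))
    (hW : (wronskianMatrix (f ∘ i.succAbove) N).det ≠ 0) (a : K) :
    ∑ j, (f j).roots.count a ≤ (wronskianMatrix (f ∘ i.succAbove) N).det.roots.count a +
      (N - 1) * #{j | a ∈ (f j).roots} := by
  obtain ⟨i₁, hi₁⟩ := hcop a
  have hi₁' : (f i₁).roots.count a = 0 :=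
    Multiset.count_eq_zero.mpr fun h => hi₁ (mem_roots'.mp h).2
  -- All the minors of the Wronskian agree up to sign, so we may use the one omitting `f i₁`.
  have hdvd : (X - C a) ^ ∑ c, ((f (i₁.succAbove c)).roots.count a - (N - 1)) ∣
      (wronskianMatrix (f ∘ i.succAbove) N).det := by
    rw [det_wronskianMatrix_comp_succAbove f hf i i₁, Units.smul_def, zsmul_eq_mul]
    refine dvd_mul_of_dvd_right (pow_dvd_det_wronskianMatrix _ _ fun c => ?_) _
    rw [count_roots]
    exact pow_rootMultiplicity_dvd _ _
  have hW' := (le_rootMultiplicity_iff hW).mpr hdvd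
  rw [← count_roots] at hW'
  calc ∑ j, (f j).roots.count a
      ≤ ∑ j, ((f j).roots.count a - (N - 1) +
          (N - 1) * if a ∈ (f j).roots then 1 else 0) := by
        refine sum_le_sum fun j _ => ?_
        split_ifs with h
        · omega
        · simp [Multiset.count_eq_zero.mpr h]
    _ = ∑ c, ((f (i₁.succAbove c)).roots.count a - (N - 1)) +
          (N - 1) * #{j | a ∈ (f j).roots} := by
        rw [sum_add_distrib, ← mul_sum, Fin.sum_univ_succAbove _ i₁, hi₁', card_filter]
        simp
    _ ≤ _ := by omega

variable [IsAlgClosed K]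

theorem sum_count_roots_eq_natDegree (p : K[X]) {s : Finset K} (hs : p.roots.toFinset ⊆ s) :
    ∑ a ∈ s, p.roots.count a = p.natDegree := by
  rw [Multiset.sum_count_eq_card fun a ha => hs (Multiset.mem_toFinset.mpr ha),
    IsAlgClosed.card_roots_eq_natDegree]

theorem card_roots_toFinset_pos {p : K[X]} (hp : 0 < p.natDegree) : 0 < #p.roots.toFinset := by
  rwa [card_pos, Multiset.toFinset_nonempty, ← Multiset.card_pos,
    IsAlgClosed.card_roots_eq_natDegree]

variable [CharZero K]

theorem natDegree_le_mul_sum_card_roots_of_sum_eq_zero (f : Fin (N + 1) → K[X])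
    (hf : ∑ i, f i = 0) (hcop : ∀ a, ∃ j, ¬(f j).IsRoot a)
    (hli : ∀ i : Fin (N + 1), LinearIndependent K (f ∘ i.succAbove)) (i : Fin (N + 1)) :
    (f i).natDegree ≤ (N - 1) * ∑ j, #(f j).roots.toFinset := by
  set W := (wronskianMatrix (f ∘ i.succAbove) N).det
  have hW : W ≠ 0 := det_wronskianMatrix_ne_zero _ (hli i)
  set S := W.roots.toFinset ∪ univ.biUnion fun j => (f j).roots.toFinset
  have hfS : ∀ j, (f j).roots.toFinset ⊆ S := fun j =>
    (subset_biUnion_of_mem (fun j => (f j).roots.toFinset) (mem_univ j)).trans subset_union_right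
  have hcard : ∑ a ∈ S, #{j | a ∈ (f j).roots} = ∑ j, #(f j).roots.toFinset := by
    refine (sum_card_bipartiteAbove_eq_sum_card_bipartiteBelow (fun a j => a ∈ (f j).roots)).trans
      (sum_congr rfl fun j _ => congrArg card ?_)
    ext a
    simp only [bipartiteBelow, mem_filter, Multiset.mem_toFinset, and_iff_right_iff_imp]
    exact fun ha => hfS j (Multiset.mem_toFinset.mpr ha)
  have hWdeg : ∑ a ∈ S, W.roots.count a ≤ ∑ c, (f (i.succAbove c)).natDegree := by
    rw [sum_count_roots_eq_natDegree W subset_union_left]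
    exact natDegree_det_wronskianMatrix_le _
  have key : (f i).natDegree + ∑ c, (f (i.succAbove c)).natDegree ≤
      ∑ c, (f (i.succAbove c)).natDegree + (N - 1) * ∑ j, #(f j).roots.toFinset :=
    calc (f i).natDegree + ∑ c, (f (i.succAbove c)).natDegree
        = ∑ a ∈ S, ∑ j, (f j).roots.count a := by
          rw [← Fin.sum_univ_succAbove (fun j => (f j).natDegree) i, sum_comm]
          exact sum_congr rfl fun j _ => (sum_count_roots_eq_natDegree _ (hfS j)).symm
      _ ≤ ∑ a ∈ S, (W.roots.count a + (N - 1) * #{j | a ∈ (f j).roots}) :=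
          sum_le_sum fun a _ => sum_count_roots_le_of_sum_eq_zero f hf hcop i hW a
      _ ≤ _ := by
          rw [sum_add_distrib, ← mul_sum, hcard]
          exact Nat.add_le_add_right hWdeg _
  omega

theorem le_mul_of_le_exponents_of_sum_pow_eq_zero (hN : 2 ≤ N) (p : Fin (N + 1) → K[X])
    (k : Fin (N + 1) → ℕ) (hsum : ∑ i, p i ^ k i = 0)
    (hcop : ∀ a, ∃ j, ¬(p j ^ k j).IsRoot a)
    (hli : ∀ i : Fin (N + 1), LinearIndependent K fun c => p (i.succAbove c) ^ k (i.succAbove c))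
    {k₀ : ℕ} (hk₀ : ∀ i, k₀ ≤ k i) : k₀ ≤ (N + 1) * (N - 1) := by
  set f : Fin (N + 1) → K[X] := fun i => p i ^ k i
  set S := ∑ j, #(f j).roots.toFinset
  have hS : 0 < S := by
    obtain ⟨c, hc⟩ := exists_natDegree_pos_of_linearIndependent (hli 0)
      (i := ⟨0, by omega⟩) (j := ⟨1, by omega⟩) (by simp)
    exact (card_roots_toFinset_pos hc).trans_le
      (single_le_sum (f := fun j => #(f j).roots.toFinset) (fun j _ => Nat.zero_le _) (mem_univ _))
  have hlower : k₀ * S ≤ ∑ j, (f j).natDegree := by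
    rw [mul_sum]
    exact sum_le_sum fun j _ =>
      (Nat.mul_le_mul_right _ (hk₀ j)).trans (mul_card_roots_toFinset_pow_le _ _)
  have hupper : ∑ j, (f j).natDegree ≤ (N + 1) * (N - 1) * S := by
    have := sum_le_sum fun j (_ : j ∈ univ) =>
      natDegree_le_mul_sum_card_roots_of_sum_eq_zero f hsum hcop hli j
    simpa [mul_assoc] using this
  exact Nat.le_of_mul_le_mul_right (hlower.trans hupper) hS

end Field

end Polynomial

theorem min_exponent_bound (m : ℕ) (hm : 3 ≤ m) (p : Fin m → ℂ[X]) (k : Fin m → ℕ)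
    (hgcd : Finset.univ.gcd (fun i => p i ^ k i) = 1)
    (hsum : ∑ i, p i ^ k i = 0)
    (hli : ∀ j : Fin m,
      LinearIndependent ℂ (fun i : {i : Fin m // i ≠ j} => p i.1 ^ k i.1)) :
    3 * ((Finset.univ.inf' ⟨⟨0, by omega⟩, Finset.mem_univ _⟩ k : ℕ) : ℤ) <
      (m : ℤ) ^ 3 + 7 * (m : ℤ) ^ 2 - 49 * (m : ℤ) + 68 := by
  classical
  obtain ⟨N, rfl⟩ : ∃ N, m = N + 1 := ⟨m - 1, by omega⟩
  set kmin := Finset.univ.inf' ⟨⟨0, by omega⟩, Finset.mem_univ _⟩ k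
  have hk : kmin ≤ (N + 1) * (N - 1) :=
    le_mul_of_le_exponents_of_sum_pow_eq_zero (by omega) p k hsum
      (fun a => by simpa using exists_not_isRoot_of_gcd_eq_one hgcd a)
      (fun i => (hli i).comp (fun c => ⟨i.succAbove c, i.succAbove_ne c⟩)
        fun _ _ h => Fin.succAbove_right_injective (congrArg Subtype.val h))
      (fun i => Finset.inf'_le k (Finset.mem_univ i))
  have hk' : (kmin : ℤ) ≤ ((N : ℤ) + 1) * ((N : ℤ) - 1) := by
    have : 1 ≤ N := by omega
    exact_mod_cast hk
  push_cast
  nlinarith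
end

section
/- Let ε = e^{iπ/4} = √2/2 + (√2/2)i ∈ ℂ. Then the polynomials p(x) = x^4 + 1, q(x) = ε·8^{1/4}·x^3, r(x) = x^4 − 1, s(x) = 8^{1/4}·x over ℂ satisfy p^4 + q^4 = r^4 + s^4, and this common value is not the zero polynomial. -/
/-!
Since `ε ^ 4 = -1` and `(8 ^ (1/4)) ^ 4 = 8`, the identity reduces to the ring identity
`(x⁴ + 1)⁴ - 8x¹² = (x⁴ - 1)⁴ + 8x⁴`; the common value is nonzero because its constant term is `1`.
-/

open Polynomial

lemma Complex.sqrt_two_div_two_add_mul_I_pow_four :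
    (((Real.sqrt 2 / 2 : ℝ) : ℂ) + (Real.sqrt 2 / 2 : ℝ) * Complex.I) ^ 4 = -1 := by
  have hsqrt : ((Real.sqrt 2 : ℝ) : ℂ) ^ 2 = 2 := by
    norm_cast
    exact Real.sq_sqrt zero_le_two
  have hsq : (((Real.sqrt 2 / 2 : ℝ) : ℂ) + (Real.sqrt 2 / 2 : ℝ) * Complex.I) ^ 2 = Complex.I := by
    push_cast
    linear_combination (Complex.I / 2) * hsqrt + (((Real.sqrt 2 : ℝ) : ℂ) ^ 2 / 4) * Complex.I_sq
  rw [show 4 = 2 * 2 by rfl, pow_mul, hsq, Complex.I_sq]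

lemma Real.rpow_one_div_four_pow_four {x : ℝ} (hx : 0 ≤ x) : (x ^ ((1 : ℝ) / 4)) ^ 4 = x := by
  rw [one_div]
  exact_mod_cast Real.rpow_inv_natCast_pow hx four_ne_zero

lemma Polynomial.add_one_pow_four_add_C_mul_X_pow_three_pow_four {R : Type*} [CommRing R] {q s : R}
    (hq : q ^ 4 = -8) (hs : s ^ 4 = 8) :
    ((X : R[X]) ^ 4 + 1) ^ 4 + (C q * X ^ 3) ^ 4 = ((X : R[X]) ^ 4 - 1) ^ 4 + (C s * X) ^ 4 := by
  rw [mul_pow, mul_pow, ← C_pow, ← C_pow, hq, hs, C_neg, C_ofNat]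
  ring

lemma Polynomial.add_one_pow_four_add_C_mul_X_pow_three_pow_four_ne_zero {R : Type*}
    [CommRing R] [Nontrivial R] (q : R) :
    ((X : R[X]) ^ 4 + 1) ^ 4 + (C q * X ^ 3) ^ 4 ≠ 0 := by
  intro h
  simpa using congrArg (eval 0) h

theorem example_fourth_powers (ε : ℂ)
    (hε : ε = (Real.sqrt 2 / 2 : ℝ) + (Real.sqrt 2 / 2 : ℝ) * Complex.I) :
    (((X : ℂ[X]) ^ 4 + 1) ^ 4 +
        (C (ε * (((8 : ℝ) ^ ((1 : ℝ) / 4) : ℝ) : ℂ)) * X ^ 3) ^ 4 =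
      ((X : ℂ[X]) ^ 4 - 1) ^ 4 +
        (C ((((8 : ℝ) ^ ((1 : ℝ) / 4) : ℝ) : ℂ)) * X) ^ 4) ∧
    ((X : ℂ[X]) ^ 4 + 1) ^ 4 +
        (C (ε * (((8 : ℝ) ^ ((1 : ℝ) / 4) : ℝ) : ℂ)) * X ^ 3) ^ 4 ≠ 0 := by
  have hs : (((8 : ℝ) ^ ((1 : ℝ) / 4) : ℝ) : ℂ) ^ 4 = 8 := by
    exact_mod_cast Real.rpow_one_div_four_pow_four (by norm_num : (0 : ℝ) ≤ 8)
  have hq : (ε * (((8 : ℝ) ^ ((1 : ℝ) / 4) : ℝ) : ℂ)) ^ 4 = -8 := by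
    rw [mul_pow, hε, Complex.sqrt_two_div_two_add_mul_I_pow_four, hs, neg_one_mul]
  exact ⟨add_one_pow_four_add_C_mul_X_pow_three_pow_four hq hs,
    add_one_pow_four_add_C_mul_X_pow_three_pow_four_ne_zero _⟩
end

section
/- There are no polynomials a, b, c ∈ ℂ[x], not all constant, with gcd(a,b,c) = 1 and a^n + b^n = c^n for an integer n ≥ 3. -/
/-!
A common factor of `a` and `b` divides `c ^ n`, so `gcd (gcd a b) c = 1` already makes `a` and `b`
coprime. If one of `a, b, c` vanishes, coprimality forces the other two to be units. Otherwise
Mason–Stothers applies (in the form `Polynomial.flt`, valid since `n ≠ 0` in `ℂ`): it bounds each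
of `n * deg a`, `n * deg b`, `n * deg c` by `deg a + deg b + deg c - 1`, impossible for `n ≥ 3`.
-/

open Polynomial

theorem EuclideanDomain.isCoprime_of_pow_add_pow_eq_pow {R : Type*} [EuclideanDomain R]
    [DecidableEq R] {a b c : R} {n : ℕ} (hn : n ≠ 0) (heq : a ^ n + b ^ n = c ^ n)
    (hgcd : EuclideanDomain.gcd (EuclideanDomain.gcd a b) c = 1) : IsCoprime a b := by
  have hdvd : EuclideanDomain.gcd a b ∣ c ^ n :=
    heq ▸ dvd_add (dvd_pow (EuclideanDomain.gcd_dvd_left a b) hn)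
      (dvd_pow (EuclideanDomain.gcd_dvd_right a b) hn)
  have hcop : IsCoprime (EuclideanDomain.gcd a b) c :=
    EuclideanDomain.gcd_isUnit_iff.mp (hgcd ▸ isUnit_one)
  exact EuclideanDomain.gcd_isUnit_iff.mp (hcop.pow_right.isUnit_of_dvd' dvd_rfl hdvd)

section Degenerate

variable {R : Type*} [CommRing R] {a b c : R} {n : ℕ}

theorem isUnit_of_pow_add_pow_eq_pow_of_left_eq_zero (hn : n ≠ 0) (hab : IsCoprime a b)
    (heq : a ^ n + b ^ n = c ^ n) (ha : a = 0) : IsUnit b ∧ IsUnit c := by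
  subst ha
  have hb : IsUnit b := isCoprime_zero_left.mp hab
  rw [zero_pow hn, zero_add] at heq
  exact ⟨hb, (isUnit_pow_iff hn).mp (heq ▸ hb.pow n)⟩

theorem isUnit_of_pow_add_pow_eq_zero (hn : n ≠ 0) (hab : IsCoprime a b)
    (heq : a ^ n + b ^ n = 0) : IsUnit a ∧ IsUnit b := by
  rw [add_eq_zero_iff_eq_neg] at heq
  have hbn : IsUnit (b ^ n) := by
    simpa only [heq, IsCoprime.neg_left_iff, isCoprime_self] using hab.pow (m := n) (n := n)
  exact ⟨(isUnit_pow_iff hn).mp (heq ▸ hbn.neg), (isUnit_pow_iff hn).mp hbn⟩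

end Degenerate

theorem Polynomial.natDegree_eq_zero_of_pow_add_pow_eq_pow_of_mul_eq_zero {R : Type*}
    [CommRing R] [IsDomain R] {a b c : R[X]} {n : ℕ} (hn : n ≠ 0) (hab : IsCoprime a b)
    (heq : a ^ n + b ^ n = c ^ n) (h0 : a * b * c = 0) :
    a.natDegree = 0 ∧ b.natDegree = 0 ∧ c.natDegree = 0 := by
  rcases mul_eq_zero.mp h0 with hab0 | hc
  · rcases mul_eq_zero.mp hab0 with ha | hb
    · obtain ⟨hb, hc⟩ := isUnit_of_pow_add_pow_eq_pow_of_left_eq_zero hn hab heq ha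
      exact ⟨ha ▸ natDegree_zero, natDegree_eq_zero_of_isUnit hb, natDegree_eq_zero_of_isUnit hc⟩
    · obtain ⟨ha, hc⟩ := isUnit_of_pow_add_pow_eq_pow_of_left_eq_zero hn hab.symm
        (add_comm (b ^ n) (a ^ n) ▸ heq) hb
      exact ⟨natDegree_eq_zero_of_isUnit ha, hb ▸ natDegree_zero, natDegree_eq_zero_of_isUnit hc⟩
  · obtain ⟨ha, hb⟩ := isUnit_of_pow_add_pow_eq_zero hn hab (by rw [heq, hc, zero_pow hn])
    exact ⟨natDegree_eq_zero_of_isUnit ha, natDegree_eq_zero_of_isUnit hb, hc ▸ natDegree_zero⟩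

theorem fermat_for_polynomials :
    ¬ ∃ (n : ℕ) (a b c : ℂ[X]), 3 ≤ n ∧
      ¬ (a.natDegree = 0 ∧ b.natDegree = 0 ∧ c.natDegree = 0) ∧
      EuclideanDomain.gcd (EuclideanDomain.gcd a b) c = 1 ∧
      a ^ n + b ^ n = c ^ n := by
  rintro ⟨n, a, b, c, hn, hdeg, hgcd, heq⟩
  have hn0 : n ≠ 0 := by omega
  have hab : IsCoprime a b := EuclideanDomain.isCoprime_of_pow_add_pow_eq_pow hn0 heq hgcd
  apply hdeg
  by_cases h0 : a * b * c = 0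
  · exact natDegree_eq_zero_of_pow_add_pow_eq_pow_of_mul_eq_zero hn0 hab heq h0
  · obtain ⟨hab0, hc⟩ := mul_ne_zero_iff.mp h0
    obtain ⟨ha, hb⟩ := mul_ne_zero_iff.mp hab0
    exact Polynomial.flt hn (Nat.cast_ne_zero.mpr hn0) ha hb hc hab heq
end

section
/- Let p, q, r, s ∈ ℂ[x] with gcd(p,q,r,s) = 1, p^n + q^n = r^n + s^n for some n ≥ 1, all of p's−ps', q's−qs', r's−rs' nonzero, and k = max{deg p, deg q, deg r, deg s} = deg s. Then d = gcd(p^{n−1}(p's−ps'), q^{n−1}(q's−qs'), r^{n−1}(r's−rs')) satisfies deg d ≤ 6k − 3. -/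
/-!
Write `W(u) = u's - us'`. As `s^n = p^n + q^n - r^n` lies in the ideal `(p, q, r)` and `p, q, r, s`
generate the unit ideal, `(p, q, r)` has radical, hence is, the unit ideal; then so is
`(p^(n-1), q^(n-1), r^(n-1))`. Since `d` divides `p^(n-1) W(p) W(q) W(r)` and its two analogues,
it divides `W(p) W(q) W(r)`, and each factor, being the Wronskian of `s` and a polynomial of
degree at most `k`, has degree at most `2k - 1`.
-/

open Polynomial

theorem EuclideanDomain.gcd_mem_of_mem {R : Type*} [EuclideanDomain R] [DecidableEq R]
    {I : Ideal R} {x y : R} (hx : x ∈ I) (hy : y ∈ I) : gcd x y ∈ I := by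
  have hle : Ideal.span {x, y} ≤ I := Ideal.span_le.mpr (Set.insert_subset hx (by simpa))
  exact hle (EuclideanDomain.span_gcd x y ▸ Ideal.mem_span_singleton_self _)

section CommRing

variable {R : Type*} [CommRing R]

theorem Ideal.span_triple_eq_top_of_pow_add_pow_eq {n : ℕ} (hn : n ≠ 0) {p q r s : R}
    (hspan : Ideal.span {p, q, r, s} = ⊤) (heq : p ^ n + q ^ n = r ^ n + s ^ n) :
    Ideal.span {p, q, r} = ⊤ := by
  set I := Ideal.span {p, q, r}
  have hpow : ∀ t ∈ ({p, q, r} : Set R), t ^ n ∈ I := fun t ht =>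
    I.pow_mem_of_mem (Ideal.subset_span ht) n (Nat.pos_of_ne_zero hn)
  have hs : s ^ n ∈ I := by
    rw [show s ^ n = p ^ n + q ^ n - r ^ n by rw [heq]; ring]
    exact I.sub_mem (I.add_mem (hpow p (by simp)) (hpow q (by simp))) (hpow r (by simp))
  rw [← Ideal.radical_eq_top, eq_top_iff, ← hspan, Ideal.span_le]
  rintro t (rfl | rfl | rfl | rfl)
  iterate 3 exact Ideal.le_radical (Ideal.subset_span (by simp))
  exact ⟨n, hs⟩

theorem dvd_of_forall_dvd_pow_mul {s : Set R} (hs : Ideal.span s = ⊤) (m : ℕ) {d x : R}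
    (h : ∀ t ∈ s, d ∣ t ^ m * x) : d ∣ x := by
  have hle : Ideal.span ((· ^ m) '' s) ≤ (Ideal.span {d}).colon {x} := by
    rw [Ideal.span_le]
    rintro _ ⟨t, ht, rfl⟩
    exact Submodule.mem_colon_singleton.mpr (Ideal.mem_span_singleton.mpr (h t ht))
  have hone := hle ((Ideal.span_pow_eq_top s hs m).symm ▸ Submodule.mem_top : (1 : R) ∈ _)
  simpa [Ideal.mem_span_singleton] using Submodule.mem_colon_singleton.mp hone

theorem Polynomial.natDegree_derivative_mul_sub_mul_derivative_lt {u v : R[X]}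
    (hw : derivative u * v - u * derivative v ≠ 0) :
    (derivative u * v - u * derivative v).natDegree < u.natDegree + v.natDegree := by
  have hwr : derivative u * v - u * derivative v = wronskian v u := by rw [wronskian]; ring
  rw [hwr] at hw ⊢
  exact add_comm v.natDegree _ ▸ natDegree_wronskian_lt_add hw

end CommRing

theorem EuclideanDomain.span_eq_top_of_gcd_eq_one_of_pow_add_pow_eq {R : Type*}
    [EuclideanDomain R] [DecidableEq R] {n : ℕ} (hn : n ≠ 0) {p q r s : R}
    (hgcd : gcd (gcd (gcd p q) r) s = 1) (heq : p ^ n + q ^ n = r ^ n + s ^ n) :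
    Ideal.span {p, q, r} = ⊤ := by
  refine Ideal.span_triple_eq_top_of_pow_add_pow_eq hn ?_ heq
  rw [Ideal.eq_top_iff_one, ← hgcd]
  refine gcd_mem_of_mem (gcd_mem_of_mem (gcd_mem_of_mem ?_ ?_) ?_) ?_ <;>
    exact Ideal.subset_span (by simp)

theorem gcd_degree_bound_general (n : ℕ) (hn : 1 ≤ n) (p q r s : ℂ[X])
    (hgcd : EuclideanDomain.gcd (EuclideanDomain.gcd (EuclideanDomain.gcd p q) r) s = 1)
    (heq : p ^ n + q ^ n = r ^ n + s ^ n)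
    (hpw : derivative p * s - p * derivative s ≠ 0)
    (hqw : derivative q * s - q * derivative s ≠ 0)
    (hrw : derivative r * s - r * derivative s ≠ 0)
    (k : ℕ)
    (hk : k = max (max (max p.natDegree q.natDegree) r.natDegree) s.natDegree) :
    ((EuclideanDomain.gcd
        (EuclideanDomain.gcd
          (p ^ (n - 1) * (derivative p * s - p * derivative s))
          (q ^ (n - 1) * (derivative q * s - q * derivative s)))
        (r ^ (n - 1) * (derivative r * s - r * derivative s))).natDegree : ℤ) ≤
      6 * (k : ℤ) - 3 := by
  set A := derivative p * s - p * derivative s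
  set B := derivative q * s - q * derivative s
  set C := derivative r * s - r * derivative s
  have hspan := EuclideanDomain.span_eq_top_of_gcd_eq_one_of_pow_add_pow_eq (by omega) hgcd heq
  have hABC : A * B * C ≠ 0 := mul_ne_zero (mul_ne_zero hpw hqw) hrw
  set d := EuclideanDomain.gcd
    (EuclideanDomain.gcd (p ^ (n - 1) * A) (q ^ (n - 1) * B)) (r ^ (n - 1) * C)
  have hdvd : d ∣ A * B * C := by
    refine dvd_of_forall_dvd_pow_mul hspan (n - 1) ?_
    rintro t (rfl | rfl | rfl)
    · exact (EuclideanDomain.gcd_dvd_left _ _).trans (EuclideanDomain.gcd_dvd_left _ _)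
        |>.trans (mul_dvd_mul_left _ ((dvd_mul_right A B).mul_right C))
    · exact (EuclideanDomain.gcd_dvd_left _ _).trans (EuclideanDomain.gcd_dvd_right _ _)
        |>.trans (mul_dvd_mul_left _ ((dvd_mul_left B A).mul_right C))
    · exact (EuclideanDomain.gcd_dvd_right _ _).trans (mul_dvd_mul_left _ (dvd_mul_left C _))
  have hA : A.natDegree < p.natDegree + s.natDegree :=
    natDegree_derivative_mul_sub_mul_derivative_lt hpw
  have hB : B.natDegree < q.natDegree + s.natDegree :=
    natDegree_derivative_mul_sub_mul_derivative_lt hqw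
  have hC : C.natDegree < r.natDegree + s.natDegree :=
    natDegree_derivative_mul_sub_mul_derivative_lt hrw
  have hd := natDegree_le_of_dvd hdvd hABC
  rw [natDegree_mul (mul_ne_zero hpw hqw) hrw, natDegree_mul hpw hqw] at hd
  omega

theorem gcd_degree_bound (n : ℕ) (hn : 1 ≤ n) (p q r s : ℂ[X])
    (hgcd : EuclideanDomain.gcd (EuclideanDomain.gcd (EuclideanDomain.gcd p q) r) s = 1)
    (heq : p ^ n + q ^ n = r ^ n + s ^ n)
    (hpw : derivative p * s - p * derivative s ≠ 0)
    (hqw : derivative q * s - q * derivative s ≠ 0)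
    (hrw : derivative r * s - r * derivative s ≠ 0)
    (k : ℕ)
    (hk : k = max (max (max p.natDegree q.natDegree) r.natDegree) s.natDegree)
    (hks : k = s.natDegree) :
    ((EuclideanDomain.gcd
        (EuclideanDomain.gcd
          (p ^ (n - 1) * (derivative p * s - p * derivative s))
          (q ^ (n - 1) * (derivative q * s - q * derivative s)))
        (r ^ (n - 1) * (derivative r * s - r * derivative s))).natDegree : ℤ) ≤
      6 * (k : ℤ) - 3 :=
  gcd_degree_bound_general n hn p q r s hgcd heq hpw hqw hrw k hk
end
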